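/- Let 𝒟 = [n_1] × … × [n_d] be a d-dimensional grid graph (all n_i ≥ 2) and let V ≥ 1. Two vertices p, p' ∈ 𝒟 satisfy S_V(p) = S_V(p') if and only if for every i ∈ {1, …, d} one has l_i(p) = l_i(p') and r_i(p) = r_i(p'). -/

import Mathlib

open Finset

/-- Manhattan (ℓ¹) norm of an integer vector. -/
def manhattan {d : ℕ} (p : Fin d → ℤ) : ℤ := ∑ i, |p i|

/-- The grid graph vertex set `[n 0] × ⋯ × [n (d-1)]`. -/
def grid {d : ℕ} (n : Fin d → ℕ) : Set (Fin d → ℤ) :=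
  {p | ∀ i, 1 ≤ p i ∧ p i ≤ (n i : ℤ)}

/-- Sensing data `S_V(p)`: relative positions of points of `D` within
Manhattan distance `V` of `p`. -/
def sense {d : ℕ} (D : Set (Fin d → ℤ)) (V : ℕ) (p : Fin d → ℤ) : Set (Fin d → ℤ) :=
  {q | p + q ∈ D ∧ manhattan q ≤ (V : ℤ)}

/-- A deterministic agent algorithm with `b` bits of memory: maps sensing data and a
memory state to a step and a new memory state. -/
structure Agent (d b : ℕ) where
  act : Set (Fin d → ℤ) → (Fin b → Bool) → (Fin d → ℤ) × (Fin b → Bool)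

namespace Agent

/-- Validity: at every vertex of `D`, in every memory state, the chosen step is a
unit step leading to a vertex of `D`. -/
def Valid {d b : ℕ} (A : Agent d b) (D : Set (Fin d → ℤ)) (V : ℕ) : Prop :=
  ∀ p ∈ D, ∀ m, manhattan (A.act (sense D V p) m).1 = 1 ∧
    (A.act (sense D V p) m).1 ∈ sense D V p

/-- The trajectory (position, memory) of the agent after `t` steps, starting from
position `v` and memory state `m`. -/
def traj {d b : ℕ} (A : Agent d b) (D : Set (Fin d → ℤ)) (V : ℕ)
    (v : Fin d → ℤ) (m : Fin b → Bool) : ℕ → (Fin d → ℤ) × (Fin b → Bool)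
  | 0 => (v, m)
  | t + 1 =>
      let s := Agent.traj A D V v m t
      (s.1 + (A.act (sense D V s.1) s.2).1, (A.act (sense D V s.1) s.2).2)

/-- The agent patrols `D`: it is valid, and from any initial position in `D` and any
initial memory state, its trajectory visits every vertex of `D` within finitely many
steps. -/
def Patrols {d b : ℕ} (A : Agent d b) (D : Set (Fin d → ℤ)) (V : ℕ) : Prop :=
  A.Valid D V ∧ ∀ v₁ ∈ D, ∀ m, ∀ v ∈ D, ∃ t, (A.traj D V v₁ m t).1 = v

end Agent

/-- The graph on a set of integer vectors with edges between points at Manhattan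
distance 1. -/
def latticeGraph {d : ℕ} (S : Set (Fin d → ℤ)) : SimpleGraph S where
  Adj p q := manhattan (p.1 - q.1) = 1
  symm := by
    refine ⟨?_⟩
    intro p q h
    simp only [manhattan, Pi.sub_apply] at h ⊢
    simpa [abs_sub_comm] using h
  loopless := by
    refine ⟨?_⟩
    intro p h
    simp [manhattan] at h

/-- The `d`-dimensional grid graph `[n 0] × ⋯ × [n (d-1)]`. -/
def gridGraph {d : ℕ} (n : Fin d → ℕ) : SimpleGraph (grid n) :=
  latticeGraph (grid n)

/-!
Relative to `p`, a displacement `q` stays in the grid iff each coordinate `q i` lies in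
`[-(pᵢ - 1), nᵢ - pᵢ]`; inside the ℓ¹-ball of radius `V` these intervals may be truncated at `V`,
so `S_V(p)` is the ball cut by the box `∏ [-lᵢ(p), rᵢ(p)]`. The box determines `S_V(p)`, and
conversely the multiples of the `i`-th unit vector in `S_V(p)` are exactly `[-lᵢ(p), rᵢ(p)]`.
-/

lemma abs_apply_le_manhattan {d : ℕ} (q : Fin d → ℤ) (i : Fin d) : |q i| ≤ manhattan q :=
  single_le_sum (fun j _ => abs_nonneg (q j)) (mem_univ i)

lemma manhattan_single {d : ℕ} (i : Fin d) (c : ℤ) : manhattan (Pi.single i c) = |c| := by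
  simp [manhattan, Pi.single_apply, apply_ite]

section Grid

variable {d : ℕ} {n : Fin d → ℕ} {V : ℕ} {p : Fin d → ℤ}

lemma mem_sense_grid_iff {q : Fin d → ℤ} :
    q ∈ sense (grid n) V p ↔ manhattan q ≤ V ∧
      ∀ i, q i ∈ Set.Icc (-min (p i - 1) (V : ℤ)) (min ((n i : ℤ) - p i) V) := by
  refine ⟨fun ⟨hgrid, hV⟩ => ⟨hV, fun i => ?_⟩, fun ⟨hV, hbox⟩ => ⟨fun i => ?_, hV⟩⟩
  · have := abs_le.mp ((abs_apply_le_manhattan q i).trans hV)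
    have := hgrid i
    simp only [Pi.add_apply] at this
    constructor <;> omega
  · have := hbox i
    simp only [Pi.add_apply, Set.mem_Icc] at this ⊢
    omega

lemma single_mem_sense_grid_iff (hp : p ∈ grid n) (i : Fin d) (c : ℤ) :
    Pi.single i c ∈ sense (grid n) V p ↔
      c ∈ Set.Icc (-min (p i - 1) (V : ℤ)) (min ((n i : ℤ) - p i) V) := by
  rw [mem_sense_grid_iff, manhattan_single]
  refine ⟨fun h => by simpa using h.2 i, fun hc => ⟨?_, fun j => ?_⟩⟩
  · rw [Set.mem_Icc] at hc
    exact abs_le.mpr ⟨by omega, by omega⟩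
  · rcases eq_or_ne j i with rfl | hj
    · simpa using hc
    · have := hp j
      simp only [Pi.single_eq_of_ne hj, Set.mem_Icc]
      omega

end Grid

theorem sense_eq_iff_boundary_distances_eq_general {d : ℕ} (n : Fin d → ℕ) (V : ℕ)
    (p p' : Fin d → ℤ) (hp : p ∈ grid n) (hp' : p' ∈ grid n) :
    sense (grid n) V p = sense (grid n) V p' ↔
      ∀ i, min (p i - 1) (V : ℤ) = min (p' i - 1) (V : ℤ) ∧
        min ((n i : ℤ) - p i) (V : ℤ) = min ((n i : ℤ) - p' i) (V : ℤ) := by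
  refine ⟨fun h i => ?_, fun h => ?_⟩
  · have hbox : Set.Icc (-min (p i - 1) (V : ℤ)) (min ((n i : ℤ) - p i) V) =
        Set.Icc (-min (p' i - 1) (V : ℤ)) (min ((n i : ℤ) - p' i) V) := by
      ext c
      rw [← single_mem_sense_grid_iff hp, ← single_mem_sense_grid_iff hp', h]
    have hne : -min (p i - 1) (V : ℤ) ≤ min ((n i : ℤ) - p i) V := by
      have := hp i
      omega
    rw [Set.Icc_eq_Icc_iff hne, neg_inj] at hbox
    exact hbox
  · ext q
    simp only [mem_sense_grid_iff, h]

/-- Two vertices `p, p'` of `𝒟 = [n 0] × ⋯ × [n (d-1)]` have the same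
sensing data iff for every dimension `i` the boundary distances agree:
`min (pᵢ - 1) V = min (p'ᵢ - 1) V` and `min (nᵢ - pᵢ) V = min (nᵢ - p'ᵢ) V`. -/
theorem sense_eq_iff_boundary_distances_eq {d : ℕ} (hd : 1 ≤ d) (n : Fin d → ℕ)
    (hn : ∀ i, 2 ≤ n i) (V : ℕ) (hV : 1 ≤ V)
    (p p' : Fin d → ℤ) (hp : p ∈ grid n) (hp' : p' ∈ grid n) :
    sense (grid n) V p = sense (grid n) V p' ↔
      ∀ i, min (p i - 1) (V : ℤ) = min (p' i - 1) (V : ℤ) ∧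
        min ((n i : ℤ) - p i) (V : ℤ) = min ((n i : ℤ) - p' i) (V : ℤ) :=
  sense_eq_iff_boundary_distances_eq_general n V p p' hp hp'
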